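/- arXiv:2505.04076 — 3 statements merged into one kernel-verified Lean document; each statement's English description precedes it below -/
import Mathlib

section
/- For probability distributions p and q on a finite set X, the variational distance V(p,q) = Σ_{x∈X} |p(x) - q(x)| satisfies Pinsker's inequality: V(p,q) ≤ √(2 ln 2 · D(p‖q)), where D(p‖q) = Σ_x p(x) log(p(x)/q(x)) is the relative entropy with logarithm base 2. -/
/-!
Both sides are compared through `S = ∑ (p - q)² / (p + 2q)`. Pointwise,
`a log (a / b) ≥ a - b + (3/2) (a - b)² / (a + 2b)`; with `t = a / b` this is the one-variable
inequality `(3/2) (t - 1)² ≤ (t log t - t + 1) (t + 2)`: the difference vanishes at `t = 1` and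
has derivative `2 ((t + 1) log t - 2 (t - 1))`, which has the sign of `t - 1`. Summing and using
`∑ p = ∑ q` gives `ln 2 · D(p‖q) ≥ (3/2) S`, while Cauchy–Schwarz with the weights `p + 2q`, of
total mass `3`, gives `V(p, q)² ≤ 3 S`.
-/

open Finset Real InformationTheory Set

lemma sq_sum_le_sum_mul_sum_sq_div {ι R : Type*} [Field R] [LinearOrder R] [IsStrictOrderedRing R]
    (s : Finset ι) {f w : ι → R} (hw : ∀ i ∈ s, 0 ≤ w i) (hfw : ∀ i ∈ s, w i = 0 → f i = 0) :
    (∑ i ∈ s, f i) ^ 2 ≤ (∑ i ∈ s, w i) * ∑ i ∈ s, f i ^ 2 / w i := by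
  refine sum_sq_le_sum_mul_sum_of_sq_le_mul s hw (fun i hi => div_nonneg (sq_nonneg _) (hw i hi))
    fun i hi => ?_
  rcases (hw i hi).eq_or_lt with hzero | hpos
  · simp [hfw i hi hzero.symm]
  · rw [mul_div_cancel₀ _ hpos.ne']

lemma monotoneOn_add_one_mul_log_sub :
    MonotoneOn (fun t : ℝ => (t + 1) * log t - 2 * (t - 1)) (Ioi 0) := by
  have hderiv : ∀ x ∈ Ioi (0 : ℝ), HasDerivAt (fun t : ℝ => (t + 1) * log t - 2 * (t - 1))
      (log x - (1 - x⁻¹)) x := by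
    intro x hx
    have hx0 : x ≠ 0 := ne_of_gt hx
    refine ((((hasDerivAt_id x).add_const 1).mul (hasDerivAt_log hx0)).sub
      (((hasDerivAt_id x).sub_const 1).const_mul 2)).congr_deriv ?_
    simp only [id]
    field_simp
    ring
  refine monotoneOn_of_hasDerivWithinAt_nonneg (convex_Ioi 0)
    (fun x hx => (hderiv x hx).continuousAt.continuousWithinAt)
    (fun x hx => (hderiv x (interior_subset hx)).hasDerivWithinAt) fun x hx => ?_
  rw [interior_Ioi] at hx
  linarith [one_sub_inv_le_log_of_pos hx]

lemma three_halves_mul_sq_le_klFun_mul_add_two {t : ℝ} (ht : 0 ≤ t) :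
    3 / 2 * (t - 1) ^ 2 ≤ klFun t * (t + 2) := by
  set G : ℝ → ℝ := fun t => klFun t * (t + 2) - 3 / 2 * (t - 1) ^ 2
  set h : ℝ → ℝ := fun t => (t + 1) * log t - 2 * (t - 1)
  have hderiv : ∀ x, 0 < x → HasDerivAt G (2 * h x) x := by
    intro x hx
    refine (((hasDerivAt_klFun (ne_of_gt hx)).mul ((hasDerivAt_id x).add_const 2)).sub
      ((((hasDerivAt_id x).sub_const 1).pow 2).const_mul (3 / 2))).congr_deriv ?_
    simp only [h, klFun_apply, id]
    ring
  have hdiff : ∀ x, 0 < x → DifferentiableAt ℝ G x := fun x hx => (hderiv x hx).differentiableAt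
  have hh1 : h 1 = 0 := by simp [h]
  have hmin : IsMinOn G (Ici 0) 1 := by
    refine isMinOn_Ici_of_deriv (by fun_prop) (by fun_prop)
      (fun x hx => (hdiff x hx.1).differentiableWithinAt)
      (fun x hx => (hdiff x (one_pos.trans hx)).differentiableWithinAt)
      (fun x hx => ?_) (fun x hx => ?_)
    · have hhx : h x ≤ h 1 := monotoneOn_add_one_mul_log_sub hx.1 (mem_Ioi.2 one_pos) hx.2.le
      rw [(hderiv x hx.1).deriv]
      linarith
    · have hhx : h 1 ≤ h x := monotoneOn_add_one_mul_log_sub (mem_Ioi.2 one_pos)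
        (mem_Ioi.2 (one_pos.trans hx)) hx.le
      rw [(hderiv x (one_pos.trans hx)).deriv]
      linarith
  have hGt : G 1 ≤ G t := hmin (mem_Ici.2 ht)
  simp only [G, klFun_one] at hGt
  linarith

lemma sub_add_three_halves_mul_sq_div_le_mul_log_div {a b : ℝ} (ha : 0 ≤ a) (hb : 0 < b) :
    a - b + 3 / 2 * (a - b) ^ 2 / (a + 2 * b) ≤ a * log (a / b) := by
  have hb0 : b ≠ 0 := ne_of_gt hb
  have hkey := three_halves_mul_sq_le_klFun_mul_add_two (div_nonneg ha hb.le)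
  have hden : 0 < a / b + 2 := by positivity
  calc a - b + 3 / 2 * (a - b) ^ 2 / (a + 2 * b)
      = a - b + b * (3 / 2 * (a / b - 1) ^ 2 / (a / b + 2)) := by
        field_simp
    _ ≤ a - b + b * klFun (a / b) := by
        gcongr
        exact (div_le_iff₀ hden).2 hkey
    _ = a * log (a / b) := by
        rw [klFun_apply]
        field_simp
        ring

lemma three_halves_mul_sum_sq_div_le_sum_mul_log_div {ι : Type*} (s : Finset ι) {p q : ι → ℝ}
    (hp : ∀ i ∈ s, 0 ≤ p i) (hq : ∀ i ∈ s, 0 ≤ q i) (hpq : ∀ i ∈ s, 0 < p i → 0 < q i)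
    (hsum : ∑ i ∈ s, p i = ∑ i ∈ s, q i) :
    3 / 2 * ∑ i ∈ s, (p i - q i) ^ 2 / (p i + 2 * q i) ≤ ∑ i ∈ s, p i * log (p i / q i) := by
  have hterm : ∀ i ∈ s,
      p i - q i + 3 / 2 * (p i - q i) ^ 2 / (p i + 2 * q i) ≤ p i * log (p i / q i) := by
    intro i hi
    rcases (hq i hi).eq_or_lt with hq0 | hq0
    · have hp0 : p i = 0 := le_antisymm (not_lt.1 fun h => (hpq i hi h).ne hq0) (hp i hi)
      simp [hp0, ← hq0]
    · exact sub_add_three_halves_mul_sq_div_le_mul_log_div (hp i hi) hq0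
  have hcancel : ∑ i ∈ s, (p i - q i) = 0 := by rw [sum_sub_distrib, hsum, sub_self]
  calc 3 / 2 * ∑ i ∈ s, (p i - q i) ^ 2 / (p i + 2 * q i)
      = ∑ i ∈ s, (p i - q i + 3 / 2 * (p i - q i) ^ 2 / (p i + 2 * q i)) := by
        simp only [sum_add_distrib, hcancel, zero_add, mul_sum, mul_div_assoc]
    _ ≤ ∑ i ∈ s, p i * log (p i / q i) := sum_le_sum hterm

/-- Pinsker's inequality (base-2 relative entropy): the variational distance
`V(p,q) = ∑ |p x - q x|` is at most `√(2 ln 2 · D(p‖q))`. -/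
theorem pinsker_inequality {X : Type*} [Fintype X] (p q : X → ℝ)
    (hp0 : ∀ x, 0 ≤ p x) (hq0 : ∀ x, 0 ≤ q x)
    (hp1 : ∑ x, p x = 1) (hq1 : ∑ x, q x = 1)
    (habs : ∀ x, 0 < p x → 0 < q x) :
    ∑ x, |p x - q x| ≤
      Real.sqrt (2 * Real.log 2 * (∑ x, p x * Real.logb 2 (p x / q x))) := by
  set S := ∑ x, (p x - q x) ^ 2 / (p x + 2 * q x)
  have hKL : 3 / 2 * S ≤ ∑ x, p x * log (p x / q x) :=
    three_halves_mul_sum_sq_div_le_sum_mul_log_div univ (fun x _ => hp0 x) (fun x _ => hq0 x)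
      (fun x _ => habs x) (hp1.trans hq1.symm)
  have hweights : ∑ x, (p x + 2 * q x) = 3 := by
    rw [sum_add_distrib, ← mul_sum, hp1, hq1]
    norm_num
  have hCS : (∑ x, |p x - q x|) ^ 2 ≤ 3 * S := by
    have := sq_sum_le_sum_mul_sum_sq_div univ (f := fun x => |p x - q x|)
      (w := fun x => p x + 2 * q x) (fun x _ => by linarith [hp0 x, hq0 x])
      (fun x _ hw => by simp only [abs_eq_zero]; linarith [hp0 x, hq0 x])
    simpa only [hweights, sq_abs] using this
  have hlogb : log 2 * ∑ x, p x * logb 2 (p x / q x) = ∑ x, p x * log (p x / q x) := by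
    rw [mul_sum]
    refine sum_congr rfl fun x _ => ?_
    have hlog2 : log 2 ≠ 0 := (log_pos one_lt_two).ne'
    rw [logb]
    field_simp
  refine le_sqrt_of_sq_le ?_
  rw [mul_assoc, hlogb]
  linarith
end

section
/- Leftover hash lemma (min-entropy version): let (U, Z) be jointly distributed random variables on finite sets, let F : R × U → {0,1}^r be drawn from a 2-universal family with R chosen uniformly and independently of (U, Z). If the conditional min-entropy H_∞(U|Z) := min_{z: p_Z(z)>0} min_u log(p_Z(z)/p_{UZ}(u,z)) satisfies H_∞(U|Z) ≥ r + 2 log(1/δ), then V(p_{F(R,U),R,Z}, u_r × p_R × p_Z) ≤ 2δ, where u_r is the uniform distribution on {0,1}^r. -/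
/-!
Fix `z` and put `q = p(·, z)`, `s = ∑ q`. For each seed `ρ` and output `x ∈ X = {0,1}^r` let
`f(x, ρ)` be the mass hashed to `x`, divided by `|R|`. Cauchy–Schwarz bounds the squared L1
distance of `f` from its mean by `|X||R| ∑ f² - s²`, and `∑ f²` is the collision mass of
`(F(R,U), R)`, which 2-universality bounds by `|R|⁻¹ (∑ q² + |X|⁻¹ s²)`. The min-entropy bound
gives `∑ q² ≤ max q · s ≤ δ² |X|⁻¹ s²`, so the slice at `z` contributes at most `δ s`; summing
over `z` gives `δ ≤ 2δ`.
-/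

open Finset

theorem sq_sum_abs_sub_mean_le {ι : Type*} [Fintype ι] (f : ι → ℝ) :
    (∑ i, |f i - (∑ j, f j) / Fintype.card ι|) ^ 2
      ≤ Fintype.card ι * ∑ i, f i ^ 2 - (∑ i, f i) ^ 2 := by
  set N : ℝ := (Fintype.card ι : ℝ)
  set S := ∑ i, f i
  rcases isEmpty_or_nonempty ι with hι | hι
  · simp [N, S]
  have hN : N ≠ 0 := by positivity
  calc (∑ i, |f i - S / N|) ^ 2 ≤ N * ∑ i, (f i - S / N) ^ 2 := by
        simpa [sq_abs] using sq_sum_le_card_mul_sum_sq (s := univ) (f := fun i => |f i - S / N|)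
    _ = N * ∑ i, f i ^ 2 - S ^ 2 := by
        simp_rw [sub_sq, sum_add_distrib, sum_sub_distrib, ← sum_mul, ← mul_sum, sum_const,
          card_univ, nsmul_eq_mul]
        field_simp
        ring

theorem sum_sq_fiber_sum_eq {U X : Type*} [Fintype U] [Fintype X] [DecidableEq X]
    (g : U → X) (q : U → ℝ) :
    ∑ x, (∑ u, if g u = x then q u else 0) ^ 2
      = ∑ u, ∑ u', if g u = g u' then q u * q u' else 0 := by
  simp_rw [sq, sum_mul_sum, sum_comm (γ := X)]
  simp [eq_comm]

theorem card_filter_div_le_ite_add {U R X : Type*} [DecidableEq U] [Fintype R] [DecidableEq X]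
    (F : R → U → X) (ε : ℝ) (hε : 0 ≤ ε)
    (huniv : ∀ u u' : U, u ≠ u' →
      ((univ.filter (fun ρ : R => F ρ u = F ρ u')).card : ℝ) / Fintype.card R ≤ ε)
    (u u' : U) :
    ((univ.filter (fun ρ : R => F ρ u = F ρ u')).card : ℝ) / Fintype.card R
      ≤ (if u = u' then 1 else 0) + ε := by
  split_ifs with h
  · have hfrac : ((univ.filter (fun ρ : R => F ρ u = F ρ u')).card : ℝ) / Fintype.card R ≤ 1 :=
      div_le_one_of_le₀ (by exact_mod_cast card_filter_le _ _) (by positivity)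
    linarith
  · simpa using huniv u u' h

theorem collision_mass_le {U R X : Type*} [Fintype U] [DecidableEq U] [Fintype R] [DecidableEq X]
    (F : R → U → X) (q : U → ℝ) (hq : ∀ u, 0 ≤ q u) (ε : ℝ) (hε : 0 ≤ ε)
    (huniv : ∀ u u' : U, u ≠ u' →
      ((univ.filter (fun ρ : R => F ρ u = F ρ u')).card : ℝ) / Fintype.card R ≤ ε) :
    (Fintype.card R : ℝ)⁻¹ * ∑ ρ, ∑ u, ∑ u', (if F ρ u = F ρ u' then q u * q u' else 0)
      ≤ ∑ u, q u ^ 2 + ε * (∑ u, q u) ^ 2 := by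
  calc (Fintype.card R : ℝ)⁻¹ * ∑ ρ, ∑ u, ∑ u', (if F ρ u = F ρ u' then q u * q u' else 0)
      = ∑ u, ∑ u', ((univ.filter (fun ρ : R => F ρ u = F ρ u')).card : ℝ)
          / Fintype.card R * (q u * q u') := by
        simp_rw [sum_comm (γ := R), ← sum_filter, sum_const, nsmul_eq_mul, mul_sum]
        refine sum_congr rfl fun u _ => sum_congr rfl fun u' _ => ?_
        ring
    _ ≤ ∑ u, ∑ u', ((if u = u' then 1 else 0) + ε) * (q u * q u') := by
        gcongr with u _ u' _
        · exact mul_nonneg (hq u) (hq u')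
        · exact card_filter_div_le_ite_add F ε hε huniv u u'
    _ = ∑ u, q u ^ 2 + ε * (∑ u, q u) ^ 2 := by
        simp_rw [add_mul, sum_add_distrib, ite_mul, one_mul, zero_mul, sum_ite_eq, mem_univ,
          if_true, sq, sum_mul_sum, mul_sum]

theorem sum_abs_hash_sub_uniform_le {U R X : Type*} [Fintype U] [DecidableEq U] [Fintype R]
    [Nonempty R] [Fintype X] [Nonempty X] [DecidableEq X]
    (F : R → U → X) (q : U → ℝ) (hq : ∀ u, 0 ≤ q u) (δ : ℝ) (hδ : 0 ≤ δ)
    (huniv : ∀ u u' : U, u ≠ u' →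
      ((univ.filter (fun ρ : R => F ρ u = F ρ u')).card : ℝ) / Fintype.card R
        ≤ (Fintype.card X : ℝ)⁻¹)
    (hmin : ∀ u : U, q u ≤ (∑ u', q u') * δ ^ 2 * (Fintype.card X : ℝ)⁻¹) :
    ∑ x, ∑ ρ, |(Fintype.card R : ℝ)⁻¹ * ∑ u, (if F ρ u = x then q u else 0)
        - (Fintype.card X : ℝ)⁻¹ * (Fintype.card R : ℝ)⁻¹ * ∑ u, q u|
      ≤ δ * ∑ u, q u := by
  set cR : ℝ := (Fintype.card R : ℝ)
  set cX : ℝ := (Fintype.card X : ℝ)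
  set s := ∑ u, q u
  have hcR : cR ≠ 0 := by positivity
  have hcX : cX ≠ 0 := by positivity
  set f : X × R → ℝ := fun t => cR⁻¹ * ∑ u, if F t.2 u = t.1 then q u else 0
  have hcard : (Fintype.card (X × R) : ℝ) = cX * cR := by simp [cX, cR]
  have hsum : ∑ t, f t = s := by
    simp_rw [f, Fintype.sum_prod_type, ← mul_sum, sum_comm (γ := X)]
    simp only [sum_ite_eq, mem_univ, if_true, sum_const, card_univ, nsmul_eq_mul]
    exact inv_mul_cancel_left₀ hcR s
  have hsq : ∑ t, f t ^ 2 ≤ cR⁻¹ * (∑ u, q u ^ 2 + cX⁻¹ * s ^ 2) := by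
    calc ∑ t, f t ^ 2
        = cR⁻¹ * (cR⁻¹ * ∑ ρ, ∑ u, ∑ u', if F ρ u = F ρ u' then q u * q u' else 0) := by
          simp_rw [f, mul_pow, Fintype.sum_prod_type, sum_comm (γ := X), ← mul_sum,
            sum_sq_fiber_sum_eq]
          ring
      _ ≤ cR⁻¹ * (∑ u, q u ^ 2 + cX⁻¹ * s ^ 2) := by
          gcongr
          exact collision_mass_le F q hq _ (by positivity) huniv
  have hdiag : ∑ u, q u ^ 2 ≤ δ ^ 2 * s ^ 2 * cX⁻¹ := by
    calc ∑ u, q u ^ 2 ≤ ∑ u, q u * (s * δ ^ 2 * cX⁻¹) := by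
          gcongr with u
          rw [sq]
          exact mul_le_mul_of_nonneg_left (hmin u) (hq u)
      _ = δ ^ 2 * s ^ 2 * cX⁻¹ := by rw [← sum_mul]; ring
  have hL1 : (∑ t, |f t - s / (cX * cR)|) ^ 2 ≤ (δ * s) ^ 2 := by
    calc (∑ t, |f t - s / (cX * cR)|) ^ 2 ≤ cX * cR * ∑ t, f t ^ 2 - s ^ 2 := by
          simpa [hcard, hsum] using sq_sum_abs_sub_mean_le f
      _ ≤ cX * cR * (cR⁻¹ * (∑ u, q u ^ 2 + cX⁻¹ * s ^ 2)) - s ^ 2 := by gcongr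
      _ = cX * ∑ u, q u ^ 2 := by field_simp; ring
      _ ≤ cX * (δ ^ 2 * s ^ 2 * cX⁻¹) := by gcongr
      _ = (δ * s) ^ 2 := by field_simp
  have hs : 0 ≤ s := sum_nonneg fun u _ => hq u
  calc _ = ∑ t, |f t - s / (cX * cR)| := by
        rw [Fintype.sum_prod_type]
        congr! 4
        field_simp
    _ ≤ δ * s := le_of_pow_le_pow_left₀ two_ne_zero (by positivity) hL1

open Classical in
/-- Leftover hash lemma (min-entropy version, `ε = 0` smoothing): if `F` is drawn
uniformly from a 2-universal family `R` of hash functions into `{0,1}^r`, and the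
conditional min-entropy of `U` given `Z` satisfies `H_∞(U|Z) ≥ r + 2 log(1/δ)`
(equivalently `p(u,z) ≤ p_Z(z)·δ²·2^{-r}` on the support of `p_Z`), then the joint
distribution of `(F(R,U), R, Z)` is within variational distance `2δ` of
`uniform × uniform × p_Z`. -/
theorem leftover_hash_lemma {U Z R : Type*} [Fintype U] [Fintype Z] [Fintype R] [Nonempty R]
    {r : ℕ} (F : R → U → (Fin r → Bool))
    (p : U × Z → ℝ) (hp0 : ∀ w, 0 ≤ p w) (hp1 : ∑ w, p w = 1)
    (δ : ℝ) (hδ : 0 < δ)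
    (huniv : ∀ u u' : U, u ≠ u' →
      ((Finset.univ.filter (fun ρ : R => F ρ u = F ρ u')).card : ℝ) / Fintype.card R
        ≤ ((2 : ℝ) ^ r)⁻¹)
    (hmin : ∀ (u : U) (z : Z), 0 < (∑ u', p (u', z)) →
      p (u, z) ≤ (∑ u', p (u', z)) * δ ^ 2 * ((2 : ℝ) ^ r)⁻¹) :
    ∑ t : (Fin r → Bool) × R × Z,
      |(Fintype.card R : ℝ)⁻¹ * ∑ u, (if F t.2.1 u = t.1 then p (u, t.2.2) else 0)
        - ((2 : ℝ) ^ r)⁻¹ * (Fintype.card R : ℝ)⁻¹ * ∑ u, p (u, t.2.2)|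
      ≤ 2 * δ := by
  have hX : (Fintype.card (Fin r → Bool) : ℝ) = 2 ^ r := by simp
  have hslice : ∀ z : Z, ∑ x, ∑ ρ,
      |(Fintype.card R : ℝ)⁻¹ * ∑ u, (if F ρ u = x then p (u, z) else 0)
        - ((2 : ℝ) ^ r)⁻¹ * (Fintype.card R : ℝ)⁻¹ * ∑ u, p (u, z)|
      ≤ δ * ∑ u, p (u, z) := by
    intro z
    rw [← hX] at huniv hmin ⊢
    refine sum_abs_hash_sub_uniform_le F _ (fun u => hp0 _) δ hδ.le huniv fun u => ?_
    rcases (sum_nonneg fun u' _ => hp0 (u', z)).lt_or_eq with hz | hz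
    · exact hmin u z hz
    · have hzero := (sum_eq_zero_iff_of_nonneg fun u' _ => hp0 (u', z)).1 hz.symm u (mem_univ u)
      simp [hzero, ← hz]
  calc _ = ∑ z : Z, ∑ x, ∑ ρ,
        |(Fintype.card R : ℝ)⁻¹ * ∑ u, (if F ρ u = x then p (u, z) else 0)
          - ((2 : ℝ) ^ r)⁻¹ * (Fintype.card R : ℝ)⁻¹ * ∑ u, p (u, z)| := by
        simp only [Fintype.sum_prod_type]
        exact (sum_comm.trans (sum_congr rfl fun _ _ => sum_comm)).symm
    _ ≤ ∑ z : Z, δ * ∑ u, p (u, z) := sum_le_sum fun z _ => hslice z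
    _ = δ := by rw [← mul_sum, sum_comm, ← Fintype.sum_prod_type', hp1, mul_one]
    _ ≤ 2 * δ := by linarith
end

section
/- For i.i.d. pairs (X_i, Z_i), i=1..L, with joint pmf p_{XZ} on finite sets X × Z, and for any δ > 0, the ε-smooth conditional min-entropy satisfies H_∞^ε(p_{X^L Z^L} | p_{Z^L}) ≥ L·H(X|Z) − Lδ, where ε = 2^{−Lδ²/(2 log²(|X|+3))}. -/
/-!
Take `r = min (P, P_Z · 2^(-s))` with `s = L · H(X|Z) - L · δ`. The distance from `P` is at
most the mass of the event `P(x|z) > 2^(-s)`, which a Chernoff bound controls: tilting by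
`P(x|z)^t = ∏ p(x_i|z_i)^t` factorises over the `L` letters, and `exp u ≤ 1 + u + u²/2` for
`u ≤ 0` bounds each factor by the first two moments of `log p(x|z)`. The first moment is
`-H(X|Z)` and the second is bounded by a constant times `log²(|X| + 3)`, uniformly in the
distribution; optimising over `t` gives the Gaussian-type exponent.
-/

open Finset Real

lemma exp_le_one_add_add_sq_div_two {u : ℝ} (hu : u ≤ 0) : exp u ≤ 1 + u + u ^ 2 / 2 := by
  have hpos : 0 < 1 - u + u ^ 2 / 2 := by nlinarith
  have hneg : 1 - u + u ^ 2 / 2 ≤ exp (-u) := by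
    simpa [sub_eq_add_neg] using quadratic_le_exp_of_nonneg (neg_nonneg.2 hu)
  refine le_of_mul_le_mul_right ?_ hpos
  calc exp u * (1 - u + u ^ 2 / 2) ≤ exp u * exp (-u) := by gcongr
    _ = 1 := by rw [← exp_add, add_neg_cancel, exp_zero]
    _ ≤ (1 + u + u ^ 2 / 2) * (1 - u + u ^ 2 / 2) := by nlinarith [sq_nonneg (u ^ 2)]

lemma rpow_le_one_add_mul_log_add {r t : ℝ} (hr0 : 0 ≤ r) (hr1 : r ≤ 1) (ht : 0 ≤ t) :
    r ^ t ≤ 1 + t * log r + t ^ 2 * log r ^ 2 / 2 := by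
  rcases hr0.eq_or_lt with rfl | hr
  · simpa using zero_rpow_le_one t
  · rw [rpow_def_of_pos hr, mul_comm (log r), show t ^ 2 * log r ^ 2 = (t * log r) ^ 2 by ring]
    exact exp_le_one_add_add_sq_div_two (mul_nonpos_of_nonneg_of_nonpos ht (log_nonpos hr0 hr1))

lemma sq_mul_exp_neg_le {v : ℝ} (hv : 0 ≤ v) : v ^ 2 * exp (-v) ≤ 4 * exp (-2) := by
  have hhalf : v / 2 ≤ exp (v / 2 - 1) := by linarith [add_one_le_exp (v / 2 - 1)]
  have hsq : v ^ 2 ≤ 4 * exp (v - 2) := by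
    have h := pow_le_pow_left₀ (by linarith) hhalf 2
    rw [← exp_nat_mul, show ((2 : ℕ) : ℝ) * (v / 2 - 1) = v - 2 by push_cast; ring] at h
    linarith
  calc v ^ 2 * exp (-v) ≤ 4 * exp (v - 2) * exp (-v) := by gcongr
    _ = 4 * exp (-2) := by rw [mul_assoc, ← exp_add]; ring_nf

lemma rpow_mul_log_sq_le {y α : ℝ} (hy0 : 0 ≤ y) (hy1 : y ≤ 1) (hα : 0 < α) :
    y ^ α * log y ^ 2 ≤ 4 / (α ^ 2 * exp 2) := by
  rcases hy0.eq_or_lt with rfl | hy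
  · rw [zero_rpow hα.ne', zero_mul]; positivity
  · have hv : 0 ≤ -(α * log y) := by have := log_nonpos hy0 hy1; nlinarith
    have key := sq_mul_exp_neg_le hv
    rw [neg_neg] at key
    rw [rpow_def_of_pos hy]
    calc exp (log y * α) * log y ^ 2 = (-(α * log y)) ^ 2 * exp (α * log y) / α ^ 2 := by
          field_simp
      _ ≤ 4 * exp (-2) / α ^ 2 := div_le_div_of_nonneg_right key (by positivity)
      _ = 4 / (α ^ 2 * exp 2) := by rw [exp_neg]; field_simp

section ProbabilityVector

variable {ι : Type*} [Fintype ι] {q : ι → ℝ}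

lemma le_one_of_sum_eq_one (hq0 : ∀ i, 0 ≤ q i) (hq1 : ∑ i, q i = 1) (i : ι) : q i ≤ 1 :=
  hq1 ▸ single_le_sum (fun j _ => hq0 j) (mem_univ i)

lemma one_le_card_of_sum_eq_one (hq1 : ∑ i, q i = 1) : (1 : ℝ) ≤ Fintype.card ι := by
  have : Nonempty ι := by
    by_contra h
    simp [not_nonempty_iff.1 h] at hq1
  exact_mod_cast Fintype.card_pos

/-- Weighted AM–GM against the uniform distribution, i.e. concavity of `x ↦ x ^ (1 - α)`. -/
lemma sum_rpow_one_sub_le_card_rpow (hq0 : ∀ i, 0 ≤ q i) (hq1 : ∑ i, q i = 1) {α : ℝ}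
    (hα0 : 0 ≤ α) (hα1 : α ≤ 1) :
    ∑ i, q i ^ (1 - α) ≤ (Fintype.card ι : ℝ) ^ α := by
  set N : ℝ := (Fintype.card ι : ℝ)
  have hN : 0 < N := one_pos.trans_le (one_le_card_of_sum_eq_one hq1)
  have hNα : (N⁻¹) ^ α * N ^ α = 1 := by
    rw [← mul_rpow (by positivity) hN.le, inv_mul_cancel₀ hN.ne', one_rpow]
  have hterm (i : ι) : q i ^ (1 - α) ≤ ((1 - α) * q i + α * N⁻¹) * N ^ α :=
    calc q i ^ (1 - α) = q i ^ (1 - α) * (N⁻¹) ^ α * N ^ α := by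
          rw [mul_assoc, hNα, mul_one]
      _ ≤ ((1 - α) * q i + α * N⁻¹) * N ^ α := by
        gcongr
        exact geom_mean_le_arith_mean2_weighted (by linarith) hα0 (hq0 i) (by positivity)
          (by ring)
  calc ∑ i, q i ^ (1 - α) ≤ ∑ i, ((1 - α) * q i + α * N⁻¹) * N ^ α :=
        sum_le_sum fun i _ => hterm i
    _ = ((1 - α) * ∑ i, q i + α * (N * N⁻¹)) * N ^ α := by
      rw [← sum_mul, sum_add_distrib, ← mul_sum, sum_const, card_univ, nsmul_eq_mul]
      ring
    _ = N ^ α := by rw [hq1, mul_inv_cancel₀ hN.ne']; ring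

lemma sum_mul_log_sq_le_card_rpow (hq0 : ∀ i, 0 ≤ q i) (hq1 : ∑ i, q i = 1) {α : ℝ}
    (hα0 : 0 < α) (hα1 : α ≤ 1) :
    ∑ i, q i * log (q i) ^ 2 ≤ 4 / (α ^ 2 * exp 2) * (Fintype.card ι : ℝ) ^ α := by
  have hterm (i : ι) : q i * log (q i) ^ 2 ≤ 4 / (α ^ 2 * exp 2) * q i ^ (1 - α) := by
    rcases (hq0 i).eq_or_lt with h | h
    · rw [← h, zero_mul]; positivity
    · calc q i * log (q i) ^ 2 = q i ^ (1 - α) * (q i ^ α * log (q i) ^ 2) := by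
            rw [← mul_assoc, ← rpow_add h, sub_add_cancel, rpow_one]
        _ ≤ q i ^ (1 - α) * (4 / (α ^ 2 * exp 2)) := by
            gcongr
            exact rpow_mul_log_sq_le (hq0 i) (le_one_of_sum_eq_one hq0 hq1 i) hα0
        _ = 4 / (α ^ 2 * exp 2) * q i ^ (1 - α) := mul_comm _ _
  calc ∑ i, q i * log (q i) ^ 2 ≤ ∑ i, 4 / (α ^ 2 * exp 2) * q i ^ (1 - α) :=
        sum_le_sum fun i _ => hterm i
    _ ≤ 4 / (α ^ 2 * exp 2) * (Fintype.card ι : ℝ) ^ α := by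
        rw [← mul_sum]
        gcongr
        exact sum_rpow_one_sub_le_card_rpow hq0 hq1 hα0.le hα1

lemma exp_two_mul_one_sub_log_two_le_three : exp 2 * (1 - log 2) ≤ 3 := by
  have he : exp 2 < 7.4 := by
    rw [show (2 : ℝ) = 1 + 1 by norm_num, exp_add]
    nlinarith [exp_one_lt_d9, exp_pos 1]
  nlinarith [log_two_gt_d9, log_two_lt_d9, exp_pos 2]

/-- Take `α = 2 / log (N + 3)`, so that `(N + 3) ^ α = e²`; the factor `1 / log 2` is only
needed when `N + 3 < e²`, where `α = 1` is used instead. -/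
lemma sum_mul_log_sq_le (hq0 : ∀ i, 0 ≤ q i) (hq1 : ∑ i, q i = 1) :
    ∑ i, q i * log (q i) ^ 2 ≤ log ((Fintype.card ι : ℝ) + 3) ^ 2 / log 2 := by
  set N : ℝ := (Fintype.card ι : ℝ)
  set A := log (N + 3)
  have hN : 1 ≤ N := one_le_card_of_sum_eq_one hq1
  have hlog2 : 0 < log 2 := log_pos one_lt_two
  have hA : 2 * log 2 ≤ A := by
    rw [← log_rpow two_pos]
    exact log_le_log (by positivity) (by norm_num; linarith)
  by_cases hA2 : 2 ≤ A
  · have hApos : 0 < A := by linarith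
    have hα : (N + 3) ^ (2 / A) = exp 2 := by
      rw [rpow_def_of_pos (by linarith), show A * (2 / A) = 2 by field_simp]
    calc ∑ i, q i * log (q i) ^ 2 ≤ 4 / ((2 / A) ^ 2 * exp 2) * N ^ (2 / A) :=
          sum_mul_log_sq_le_card_rpow hq0 hq1 (by positivity) ((div_le_one hApos).2 hA2)
      _ ≤ 4 / ((2 / A) ^ 2 * exp 2) * (N + 3) ^ (2 / A) := by gcongr; linarith
      _ = A ^ 2 := by rw [hα]; field_simp; ring
      _ ≤ A ^ 2 / log 2 := le_div_self (sq_nonneg A) hlog2 (log_two_lt_d9.le.trans (by norm_num))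
  · have hsmall : N + 3 < exp 2 := by
      rw [← exp_log (show 0 < N + 3 by linarith)]; exact exp_lt_exp.2 (not_le.1 hA2)
    calc ∑ i, q i * log (q i) ^ 2 ≤ 4 / (1 ^ 2 * exp 2) * N ^ (1 : ℝ) :=
          sum_mul_log_sq_le_card_rpow hq0 hq1 one_pos le_rfl
      _ ≤ 4 * log 2 := by
          rw [rpow_one, one_pow, one_mul, div_mul_eq_mul_div, div_le_iff₀ (exp_pos 2)]
          nlinarith [exp_two_mul_one_sub_log_two_le_three]
      _ ≤ A ^ 2 / log 2 := by rw [le_div_iff₀ hlog2]; nlinarith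

end ProbabilityVector

section JointDistribution

variable {X Z : Type*} [Fintype X] {p : X × Z → ℝ}

noncomputable def sndMarginal (p : X × Z → ℝ) (z : Z) : ℝ := ∑ x, p (x, z)

/-- `p (x | z)`, with junk value `0` when `p_Z z = 0`. -/
noncomputable def condProb (p : X × Z → ℝ) (w : X × Z) : ℝ := p w / sndMarginal p w.2

lemma le_sndMarginal (hp0 : ∀ w, 0 ≤ p w) (w : X × Z) : p w ≤ sndMarginal p w.2 :=
  single_le_sum (f := fun x => p (x, w.2)) (fun _ _ => hp0 _) (mem_univ w.1)

lemma sndMarginal_nonneg (hp0 : ∀ w, 0 ≤ p w) (z : Z) : 0 ≤ sndMarginal p z :=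
  sum_nonneg fun _ _ => hp0 _

lemma condProb_nonneg (hp0 : ∀ w, 0 ≤ p w) (w : X × Z) : 0 ≤ condProb p w :=
  div_nonneg (hp0 w) (sndMarginal_nonneg hp0 w.2)

lemma condProb_le_one (hp0 : ∀ w, 0 ≤ p w) (w : X × Z) : condProb p w ≤ 1 :=
  div_le_one_of_le₀ (le_sndMarginal hp0 w) (sndMarginal_nonneg hp0 w.2)

lemma sum_condProb (hz : sndMarginal p z ≠ 0) : ∑ x, condProb p (x, z) = 1 := by
  simp only [condProb, ← sum_div]
  exact div_self hz

variable [Fintype Z]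

noncomputable def condEntropy (p : X × Z → ℝ) : ℝ :=
  (-∑ w, p w * logb 2 (p w)) - (-∑ z, sndMarginal p z * logb 2 (sndMarginal p z))

lemma sum_sndMarginal (hp1 : ∑ w, p w = 1) : ∑ z, sndMarginal p z = 1 := by
  rw [← hp1, Fintype.sum_prod_type_right]; rfl

lemma sum_mul_log_condProb (hp0 : ∀ w, 0 ≤ p w) :
    ∑ w, p w * log (condProb p w) = -(log 2 * condEntropy p) := by
  have hterm (w : X × Z) :
      p w * log (condProb p w) = p w * log (p w) - p w * log (sndMarginal p w.2) := by
    rcases (hp0 w).eq_or_lt with h | h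
    · simp [← h]
    · rw [condProb, log_div h.ne' (h.trans_le (le_sndMarginal hp0 w)).ne', mul_sub]
  have hmarg : ∑ w, p w * log (sndMarginal p w.2) =
      ∑ z, sndMarginal p z * log (sndMarginal p z) := by
    rw [Fintype.sum_prod_type_right]
    exact sum_congr rfl fun z _ => (sum_mul univ (fun x => p (x, z)) (log (sndMarginal p z))).symm
  simp only [sum_congr rfl fun w _ => hterm w, sum_sub_distrib, hmarg, condEntropy, logb,
    mul_div_assoc', ← sum_div]
  field_simp
  ring

lemma sum_mul_log_condProb_sq_le (hp0 : ∀ w, 0 ≤ p w) (hp1 : ∑ w, p w = 1) :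
    ∑ w, p w * log (condProb p w) ^ 2 ≤ log ((Fintype.card X : ℝ) + 3) ^ 2 / log 2 := by
  set c := log ((Fintype.card X : ℝ) + 3) ^ 2 / log 2
  have hfiber (z : Z) : ∑ x, p (x, z) * log (condProb p (x, z)) ^ 2 ≤ sndMarginal p z * c := by
    by_cases hz : sndMarginal p z = 0
    · have hzero (x : X) : p (x, z) = 0 := le_antisymm (hz ▸ le_sndMarginal hp0 (x, z)) (hp0 _)
      simp [hz, hzero]
    · have hp (x : X) : p (x, z) = sndMarginal p z * condProb p (x, z) := by
        rw [condProb, mul_div_cancel₀ _ hz]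
      simp only [hp, mul_assoc, ← mul_sum]
      exact mul_le_mul_of_nonneg_left
        (sum_mul_log_sq_le (fun x => condProb_nonneg hp0 _) (sum_condProb hz))
        (sndMarginal_nonneg hp0 z)
  calc ∑ w, p w * log (condProb p w) ^ 2 ≤ ∑ z, sndMarginal p z * c := by
        rw [Fintype.sum_prod_type_right]; exact sum_le_sum fun z _ => hfiber z
    _ = c := by rw [← sum_mul, sum_sndMarginal hp1, one_mul]

lemma sum_mul_condProb_rpow_le (hp0 : ∀ w, 0 ≤ p w) (hp1 : ∑ w, p w = 1) {t : ℝ}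
    (ht : 0 ≤ t) :
    ∑ w, p w * condProb p w ^ t ≤
      exp (-(t * log 2 * condEntropy p) +
        t ^ 2 / 2 * (log ((Fintype.card X : ℝ) + 3) ^ 2 / log 2)) := by
  calc ∑ w, p w * condProb p w ^ t
      ≤ ∑ w, p w * (1 + t * log (condProb p w) + t ^ 2 * log (condProb p w) ^ 2 / 2) :=
        sum_le_sum fun w _ => mul_le_mul_of_nonneg_left
          (rpow_le_one_add_mul_log_add (condProb_nonneg hp0 w) (condProb_le_one hp0 w) ht) (hp0 w)
    _ = ∑ w, p w + t * ∑ w, p w * log (condProb p w)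
          + t ^ 2 / 2 * ∑ w, p w * log (condProb p w) ^ 2 := by
        simp only [mul_sum, ← sum_add_distrib]
        exact sum_congr rfl fun w _ => by ring
    _ ≤ 1 + (-(t * log 2 * condEntropy p) +
          t ^ 2 / 2 * (log ((Fintype.card X : ℝ) + 3) ^ 2 / log 2)) := by
        have hM2 := mul_le_mul_of_nonneg_left (sum_mul_log_condProb_sq_le hp0 hp1)
          (by positivity : 0 ≤ t ^ 2 / 2)
        rw [hp1, sum_mul_log_condProb hp0]
        linarith
    _ ≤ _ := by linarith [add_one_le_exp (-(t * log 2 * condEntropy p) +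
          t ^ 2 / 2 * (log ((Fintype.card X : ℝ) + 3) ^ 2 / log 2))]

end JointDistribution

lemma sub_min_le_mul_div_rpow {Q B t : ℝ} (hQ : 0 ≤ Q) (hB : 0 < B) (ht : 0 ≤ t) :
    Q - min Q B ≤ Q * (Q / B) ^ t := by
  rcases le_or_gt Q B with hQB | hBQ
  · rw [min_eq_left hQB, sub_self]; positivity
  · rw [min_eq_right hBQ.le]
    calc Q - B ≤ Q * 1 := by linarith
      _ ≤ Q * (Q / B) ^ t := by
        gcongr; exact one_le_rpow ((one_le_div hB).2 hBQ.le) ht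

section Product

variable {ι X Z : Type*} [Fintype ι] [Fintype X] {p : X × Z → ℝ}

lemma prod_mul_condProb_rpow (hp0 : ∀ w, 0 ≤ p w) (x : ι → X) (z : ι → Z) (t : ℝ) :
    ∏ i, p (x i, z i) * condProb p (x i, z i) ^ t =
      (∏ i, p (x i, z i)) * ((∏ i, p (x i, z i)) / ∏ i, sndMarginal p (z i)) ^ t := by
  rw [prod_mul_distrib, finsetProd_rpow _ _ fun i _ => condProb_nonneg hp0 _]
  simp only [condProb, prod_div_distrib]

variable [DecidableEq ι]

noncomputable def truncatedDist (p : X × Z → ℝ) (s : ℝ) (x : ι → X) (z : ι → Z) :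
    ℝ :=
  min (∏ i, p (x i, z i)) ((∑ x' : ι → X, ∏ i, p (x' i, z i)) * 2 ^ (-s))

lemma truncatedDist_nonneg (hp0 : ∀ w, 0 ≤ p w) (s : ℝ) (x : ι → X) (z : ι → Z) :
    0 ≤ truncatedDist p s x z :=
  le_min (prod_nonneg fun _ _ => hp0 _)
    (mul_nonneg (sum_nonneg fun _ _ => prod_nonneg fun _ _ => hp0 _) (rpow_nonneg two_pos.le _))

lemma sum_prod_eq_prod_sndMarginal (z : ι → Z) :
    ∑ x : ι → X, ∏ i, p (x i, z i) = ∏ i, sndMarginal p (z i) :=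
  (Fintype.prod_sum fun i x => p (x, z i)).symm

lemma prod_sub_truncatedDist_le (hp0 : ∀ w, 0 ≤ p w) {t : ℝ} (ht : 0 ≤ t) (s : ℝ)
    (x : ι → X) (z : ι → Z) :
    ∏ i, p (x i, z i) - truncatedDist p s x z ≤
      2 ^ (s * t) * ∏ i, p (x i, z i) * condProb p (x i, z i) ^ t := by
  rw [truncatedDist, prod_mul_condProb_rpow hp0, ← sum_prod_eq_prod_sndMarginal]
  set Q := ∏ i, p (x i, z i)
  set PZ := ∑ x' : ι → X, ∏ i, p (x' i, z i)
  have hQ : 0 ≤ Q := prod_nonneg fun i _ => hp0 _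
  have hQPZ : Q ≤ PZ := single_le_sum (f := fun x' => ∏ i, p (x' i, z i))
    (fun _ _ => prod_nonneg fun i _ => hp0 _) (mem_univ x)
  rcases (hQ.trans hQPZ).eq_or_lt with hPZ | hPZ
  · have hQ0 : Q = 0 := le_antisymm (hPZ ▸ hQPZ) hQ
    rw [← hPZ, hQ0, zero_mul, min_self, sub_self]
    positivity
  · have hB : Q / (PZ * 2 ^ (-s)) = Q / PZ * 2 ^ s := by
      rw [rpow_neg two_pos.le, div_mul_eq_div_div, div_inv_eq_mul]
    calc Q - min Q (PZ * 2 ^ (-s)) ≤ Q * (Q / (PZ * 2 ^ (-s))) ^ t :=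
          sub_min_le_mul_div_rpow hQ (by positivity) ht
      _ = 2 ^ (s * t) * (Q * (Q / PZ) ^ t) := by
          rw [hB, mul_rpow (by positivity) (by positivity), ← rpow_mul two_pos.le]
          ring

variable [Fintype Z]

lemma sum_sum_prod_eq_pow {R : Type*} [CommSemiring R] (g : X × Z → R) :
    ∑ x : ι → X, ∑ z : ι → Z, ∏ i, g (x i, z i) = (∑ w, g w) ^ Fintype.card ι := by
  rw [← card_univ, ← prod_const, Fintype.sum_prod_type, Fintype.prod_sum]
  exact sum_congr rfl fun x _ => (Fintype.prod_sum fun i y => g (x i, y)).symm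

lemma sum_sum_abs_sub_truncatedDist_le (hp0 : ∀ w, 0 ≤ p w) (hp1 : ∑ w, p w = 1) {t : ℝ}
    (ht : 0 ≤ t) (s : ℝ) :
    ∑ x : ι → X, ∑ z : ι → Z, |∏ i, p (x i, z i) - truncatedDist p s x z| ≤
      2 ^ (s * t) * exp (-(t * log 2 * condEntropy p) +
        t ^ 2 / 2 * (log ((Fintype.card X : ℝ) + 3) ^ 2 / log 2)) ^ Fintype.card ι := by
  calc ∑ x : ι → X, ∑ z : ι → Z, |∏ i, p (x i, z i) - truncatedDist p s x z|
      ≤ ∑ x : ι → X, ∑ z : ι → Z,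
          2 ^ (s * t) * ∏ i, p (x i, z i) * condProb p (x i, z i) ^ t := by
        gcongr with x _ z _
        rw [abs_of_nonneg (sub_nonneg.2 (min_le_left _ _))]
        exact prod_sub_truncatedDist_le hp0 ht s x z
    _ = 2 ^ (s * t) * (∑ w, p w * condProb p w ^ t) ^ Fintype.card ι := by
        simp only [← mul_sum, sum_sum_prod_eq_pow fun w => p w * condProb p w ^ t]
    _ ≤ _ := by
        gcongr
        · exact sum_nonneg fun w _ => mul_nonneg (hp0 w) (rpow_nonneg (condProb_nonneg hp0 w) t)
        · exact sum_mul_condProb_rpow_le hp0 hp1 ht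

end Product

theorem smooth_min_entropy_iid_general {X Z : Type*} [Fintype X] [Fintype Z]
    (p : X × Z → ℝ) (hp0 : ∀ w, 0 ≤ p w) (hp1 : ∑ w, p w = 1)
    (L : ℕ) (δ : ℝ) (hδ : 0 < δ) :
    ∃ rdist : (Fin L → X) → (Fin L → Z) → ℝ,
      (∀ x z, 0 ≤ rdist x z) ∧
      (∑ x : Fin L → X, ∑ z : Fin L → Z, |(∏ i, p (x i, z i)) - rdist x z|)
        ≤ (2 : ℝ) ^ (-((L : ℝ) * δ ^ 2 /
            (2 * (Real.logb 2 ((Fintype.card X : ℝ) + 3)) ^ 2))) ∧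
      (∀ z : Fin L → Z, 0 < (∑ x : Fin L → X, ∏ i, p (x i, z i)) →
        ∀ x : Fin L → X,
          rdist x z ≤ (∑ x' : Fin L → X, ∏ i, p (x' i, z i)) *
            (2 : ℝ) ^ (-((L : ℝ) *
              ((-∑ w : X × Z, p w * Real.logb 2 (p w))
                - (-∑ z' : Z, (∑ x' : X, p (x', z')) *
                    Real.logb 2 (∑ x' : X, p (x', z'))))
              - (L : ℝ) * δ))) := by
  set A := log ((Fintype.card X : ℝ) + 3)
  have hA : 0 < A := log_pos (by linarith [(Fintype.card X).cast_nonneg (α := ℝ)])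
  have hlog2 : 0 < log 2 := log_pos one_lt_two
  set t := log 2 * δ / (A ^ 2 / log 2) with ht_def
  have ht : 0 ≤ t := by rw [ht_def]; positivity
  set s := L * condEntropy p - L * δ
  refine ⟨truncatedDist (ι := Fin L) p s, truncatedDist_nonneg hp0 s, ?_,
    fun z _ x => min_le_right _ _⟩
  calc _ ≤ 2 ^ (s * t) *
        exp (-(t * log 2 * condEntropy p) + t ^ 2 / 2 * (A ^ 2 / log 2)) ^ L := by
        simpa only [Fintype.card_fin] using
          sum_sum_abs_sub_truncatedDist_le (ι := Fin L) hp0 hp1 ht s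
    _ = _ := by
        rw [← exp_nat_mul, rpow_def_of_pos two_pos, rpow_def_of_pos two_pos, ← exp_add, logb]
        congr 1
        simp only [t, s, A]
        field_simp
        ring

/-- Smooth min-entropy of i.i.d. sequences (Holenstein–Renner): for i.i.d. pairs
`(X_i, Z_i)` with joint pmf `p` and any `δ > 0`, there is a nonnegative function
`rdist` within variational distance `ε = 2^{−Lδ²/(2 log²(|X|+3))}` of the product
distribution, witnessing `H_∞^ε(p_{X^L Z^L}|p_{Z^L}) ≥ L·H(X|Z) − Lδ`, i.e.
`rdist x z ≤ p_{Z^L}(z) · 2^{−(L·H(X|Z) − Lδ)}` on the support of `p_{Z^L}`. -/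
theorem smooth_min_entropy_iid {X Z : Type*} [Fintype X] [Fintype Z]
    (p : X × Z → ℝ) (hp0 : ∀ w, 0 ≤ p w) (hp1 : ∑ w, p w = 1)
    (L : ℕ) (hL : 0 < L) (δ : ℝ) (hδ : 0 < δ) :
    ∃ rdist : (Fin L → X) → (Fin L → Z) → ℝ,
      (∀ x z, 0 ≤ rdist x z) ∧
      (∑ x : Fin L → X, ∑ z : Fin L → Z, |(∏ i, p (x i, z i)) - rdist x z|)
        ≤ (2 : ℝ) ^ (-((L : ℝ) * δ ^ 2 /
            (2 * (Real.logb 2 ((Fintype.card X : ℝ) + 3)) ^ 2))) ∧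
      (∀ z : Fin L → Z, 0 < (∑ x : Fin L → X, ∏ i, p (x i, z i)) →
        ∀ x : Fin L → X,
          rdist x z ≤ (∑ x' : Fin L → X, ∏ i, p (x' i, z i)) *
            (2 : ℝ) ^ (-((L : ℝ) *
              ((-∑ w : X × Z, p w * Real.logb 2 (p w))
                - (-∑ z' : Z, (∑ x' : X, p (x', z')) *
                    Real.logb 2 (∑ x' : X, p (x', z'))))
              - (L : ℝ) * δ))) :=
  smooth_min_entropy_iid_general p hp0 hp1 L δ hδ
end
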